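/- arXiv:1608.07174 — 3 statements merged into one kernel-verified Lean document; each statement's English description precedes it below -/
import Mathlib

section
/- Let f : ℂ → ℂ be entire with f' nowhere vanishing, f'(0) = 1, and suppose f has a Picard exceptional value a ∈ ℂ (i.e. f(ℂ) = ℂ \ {a}). If f is not of the form c·e^{λz} + a (λ ≠ 0), then L(z) = log(f(z) - a) defines an entire function with L' nowhere vanishing, L not affine, and f(z) = a + e^{L(z)}. In particular f admits the nontrivial factorization f = (a + w) ∘ e^w ∘ L, so f is not prime. -/
/-!
Since `f - a` is entire and zero-free, it has an entire logarithm `L`: a primitive of the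
logarithmic derivative `f' / (f - a)`, normalised so that `exp ∘ L` and `f - a` agree at `0`
(their quotient has vanishing derivative). Then `L' = f' / (f - a)` never vanishes, and if `L`
were affine, `L z = c z + d`, we would get `f z = e^d e^{c z} + a` with `c = L' 0 ≠ 0`.
-/

open Complex

theorem Differentiable.exists_hasDerivAt_logDeriv_cexp_eq {g : ℂ → ℂ} (hg : Differentiable ℂ g)
    (hg0 : ∀ z, g z ≠ 0) :
    ∃ L : ℂ → ℂ, (∀ z, HasDerivAt L (logDeriv g z) z) ∧ ∀ z, cexp (L z) = g z := by
  have hlogDeriv : Differentiable ℂ (logDeriv g) := hg.deriv.div hg hg0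
  obtain ⟨L, hL0, hLuniv⟩ := hlogDeriv.isExactOn_univ.with_val_at 0 (Complex.log (g 0))
  have hL : ∀ z, HasDerivAt L (logDeriv g z) z := fun z => hLuniv z (Set.mem_univ z)
  have hquot : ∀ z, HasDerivAt (fun w => g w * cexp (-L w)) 0 z := by
    intro z
    refine ((hg z).hasDerivAt.mul (hL z).neg.cexp).congr_deriv ?_
    rw [logDeriv_apply]
    field_simp [hg0 z]
    ring
  have hquot_eq_one (z : ℂ) : g z * cexp (-L z) = 1 := by
    rw [is_const_of_deriv_eq_zero (fun w => (hquot w).differentiableAt)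
      (fun w => (hquot w).deriv) z 0, hL0, exp_neg, exp_log (hg0 0), mul_inv_cancel₀ (hg0 0)]
  refine ⟨L, hL, fun z => ?_⟩
  have h := hquot_eq_one z
  rw [exp_neg] at h
  field_simp at h
  exact h.symm

theorem stmt_9_general (f : ℂ → ℂ) (a : ℂ)
    (hf : Differentiable ℂ f)
    (hf' : ∀ z : ℂ, deriv f z ≠ 0)
    (hrange : Set.range f = {a}ᶜ)
    (hnotexp : ¬ ∃ (c lam : ℂ), lam ≠ 0 ∧ ∀ z : ℂ, f z = c * Complex.exp (lam * z) + a) :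
    ∃ L : ℂ → ℂ, Differentiable ℂ L ∧
      (∀ z : ℂ, deriv L z ≠ 0) ∧
      (¬ ∃ c d : ℂ, ∀ z : ℂ, L z = c * z + d) ∧
      (∀ z : ℂ, f z = a + Complex.exp (L z)) := by
  have hne (z : ℂ) : f z - a ≠ 0 := fun h =>
    (hrange ▸ Set.mem_range_self z : f z ∈ ({a}ᶜ : Set ℂ)) (sub_eq_zero.mp h)
  obtain ⟨L, hL, hexp⟩ := (hf.sub_const a).exists_hasDerivAt_logDeriv_cexp_eq hne
  have hL' (z : ℂ) : deriv L z ≠ 0 := by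
    rw [(hL z).deriv, logDeriv_apply, deriv_sub_const]
    exact div_ne_zero (hf' z) (hne z)
  have hf_eq (z : ℂ) : f z = a + cexp (L z) := by rw [hexp z]; ring
  refine ⟨L, fun z => (hL z).differentiableAt, hL', fun ⟨c, d, hcd⟩ => hnotexp ?_, hf_eq⟩
  have hc : deriv L 0 = c := by
    rw [funext hcd]
    exact (((hasDerivAt_id 0).const_mul c).add_const d).deriv.trans (mul_one c)
  refine ⟨cexp d, c, hc ▸ hL' 0, fun z => ?_⟩
  rw [hf_eq, hcd, exp_add]
  ring

theorem stmt_9 (f : ℂ → ℂ) (a : ℂ)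
    (hf : Differentiable ℂ f)
    (hf' : ∀ z : ℂ, deriv f z ≠ 0)
    (hf'0 : deriv f 0 = 1)
    (hrange : Set.range f = {a}ᶜ)
    (hnotexp : ¬ ∃ (c lam : ℂ), lam ≠ 0 ∧ ∀ z : ℂ, f z = c * Complex.exp (lam * z) + a) :
    ∃ L : ℂ → ℂ, Differentiable ℂ L ∧
      (∀ z : ℂ, deriv L z ≠ 0) ∧
      (¬ ∃ c d : ℂ, ∀ z : ℂ, L z = c * z + d) ∧
      (∀ z : ℂ, f z = a + Complex.exp (L z)) :=
  stmt_9_general f a hf hf' hrange hnotexp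
end

section
/- For every k ≥ 1, the function g(z) = ∫₀^z e^{-ξ^{2k}} dξ is an odd entire function with nowhere-vanishing derivative, and g(ℂ) = ℂ. -/
/-!
Surjectivity (for `g' = exp(-zⁿ)` with `n ≠ 1`), without Picard: if `g` omitted `w`, then
`g - w = exp h` for an entire `h`, and `|g(z)| ≤ |z| exp |z|ⁿ` bounds `Re h` polynomially.
Borel–Carathéodory and the Cauchy estimate then bound `h'` polynomially, and
`h' = g'/(g - w) = exp u` with `u = -zⁿ - h`, so `Re u = log |h'|` grows only logarithmically.
Borel–Carathéodory and Cauchy again force `u` to be constant, so `h = -zⁿ - a`; but then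
`h'(0) = 0`, while `h'(0) = exp (u 0) ≠ 0`.
-/

open Complex Metric Filter Topology

theorem odd_of_even_deriv {𝕜 E : Type*} [RCLike 𝕜] [NormedAddCommGroup E]
    [NormedSpace 𝕜 E] {g : 𝕜 → E} (hg : Differentiable 𝕜 g) (hg0 : g 0 = 0)
    (heven : (deriv g).Even) : g.Odd := by
  have hgneg : Differentiable 𝕜 (fun z => g (-z)) := hg.comp differentiable_neg
  have hconst : ∀ z, deriv (fun z => g (-z) + g z) z = 0 := fun z => by
    rw [deriv_fun_add (hgneg z) (hg z), deriv_comp_neg, heven z, neg_add_cancel]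
  intro z
  have := is_const_of_deriv_eq_zero (f := fun z => g (-z) + g z) (hgneg.add hg) hconst z 0
  rw [neg_zero, hg0, add_zero] at this
  exact eq_neg_of_add_eq_zero_left this

theorem exists_hasDerivAt_cexp_eq {f : ℂ → ℂ} (hf : Differentiable ℂ f)
    (hf0 : ∀ z, f z ≠ 0) :
    ∃ h : ℂ → ℂ, (∀ z, HasDerivAt h (deriv f z / f z) z) ∧ ∀ z, cexp (h z) = f z := by
  obtain ⟨h, hh0, hh⟩ :=
    (hf.deriv.div hf hf0).isExactOn_univ.with_val_at 0 (log (f 0))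
  have hh : ∀ z, HasDerivAt h (deriv f z / f z) z := fun z => hh z (Set.mem_univ z)
  refine ⟨h, hh, fun z => ?_⟩
  have hconst : ∀ z, deriv (fun z => f z * cexp (-h z)) z = 0 := fun z => by
    have := (hf z).hasDerivAt.fun_mul (hh z).fun_neg.cexp
    rw [show deriv f z * cexp (-h z) + f z * (cexp (-h z) * -(deriv f z / f z)) = 0 by
      field_simp [hf0 z]; ring] at this
    exact this.deriv
  have := is_const_of_deriv_eq_zero (f := fun z => f z * cexp (-h z))
    (hf.mul fun z => (hh z).differentiableAt.neg.cexp) hconst z 0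
  rw [hh0, exp_neg, exp_neg, exp_log (hf0 0), mul_inv_cancel₀ (hf0 0),
    mul_inv_eq_one₀ (exp_ne_zero _)] at this
  exact this.symm

theorem norm_deriv_le_of_re_le {f : ℂ → ℂ} {R M : ℝ} {c : ℂ}
    (hf : DifferentiableOn ℂ f (ball 0 R)) (hR : 0 < R) (hM : 0 < M)
    (hre : ∀ z ∈ ball (0 : ℂ) R, (f z).re ≤ M) (hc : ‖c‖ ≤ R / 4) :
    ‖deriv f c‖ ≤ 8 * (M + ‖f 0‖) / R := by
  have hsub : closedBall c (R / 4) ⊆ ball 0 R := fun z hz => by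
    rw [mem_closedBall_iff_norm] at hz
    rw [mem_ball_zero_iff]
    linarith [norm_le_norm_add_norm_sub' z c]
  have hbound : ∀ z ∈ sphere c (R / 4), ‖f z - f 0‖ ≤ 2 * (M + ‖f 0‖) := fun z hz => by
    rw [mem_sphere_iff_norm] at hz
    have hz2 : ‖z‖ ≤ R / 2 := by linarith [norm_le_norm_add_norm_sub' z c]
    have hbc := borelCaratheodory_zero (f := (f · - f 0)) (M := M + ‖f 0‖) (by positivity)
      (hf.sub_const _) (fun x hx => ?_) hR (mem_ball_zero_iff.2 (by linarith)) (sub_self _)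
    · calc ‖f z - f 0‖ ≤ 2 * (M + ‖f 0‖) * ‖z‖ / (R - ‖z‖) := hbc
        _ ≤ 2 * (M + ‖f 0‖) := by
          rw [div_le_iff₀ (by linarith)]
          gcongr
          linarith
    · simp only [Set.mem_ofPred_eq, sub_re]
      linarith [hre x hx, neg_le_abs (f 0).re, abs_re_le_norm (f 0)]
  have := norm_deriv_le_of_forall_mem_sphere_norm_le (by positivity)
    ((hf.sub_const (f 0)).diffContOnCl_ball hsub) hbound
  rw [deriv_sub_const] at this
  calc ‖deriv f c‖ ≤ 2 * (M + ‖f 0‖) / (R / 4) := this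
    _ = 8 * (M + ‖f 0‖) / R := by field_simp; ring

theorem exists_norm_deriv_le_mul_pow_of_re_le {f : ℂ → ℂ} {C : ℝ} {m : ℕ}
    (hf : Differentiable ℂ f) (hC : 0 < C) (hre : ∀ z, (f z).re ≤ C * (1 + ‖z‖) ^ m) :
    ∃ K, 0 < K ∧ ∀ z, ‖deriv f z‖ ≤ K * (1 + ‖z‖) ^ m := by
  refine ⟨2 * (C * 5 ^ m + ‖f 0‖), by positivity, fun z => ?_⟩
  set t := 1 + ‖z‖
  have ht : 1 ≤ t := le_add_of_nonneg_right (norm_nonneg z)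
  have hre' : ∀ x ∈ ball (0 : ℂ) (4 * t), (f x).re ≤ C * (5 * t) ^ m := fun x hx => by
    rw [mem_ball_zero_iff] at hx
    exact (hre x).trans (by gcongr; linarith)
  calc ‖deriv f z‖ ≤ 8 * (C * (5 * t) ^ m + ‖f 0‖) / (4 * t) :=
        norm_deriv_le_of_re_le hf.differentiableOn (by positivity) (by positivity) hre'
          (by linarith)
    _ ≤ 2 * (C * 5 ^ m + ‖f 0‖) * t ^ m := by
      rw [div_le_iff₀ (by positivity), mul_pow]
      have h1 : C * (5 ^ m * t ^ m) ≤ C * (5 ^ m * t ^ m) * t :=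
        le_mul_of_one_le_right (by positivity) ht
      have h2 : ‖f 0‖ ≤ ‖f 0‖ * (t ^ m * t) := le_mul_of_one_le_right (norm_nonneg _)
        (one_le_mul_of_one_le_of_one_le (one_le_pow₀ ht) ht)
      linarith

theorem exists_const_forall_eq_of_re_le_log {u : ℂ → ℂ} {A B : ℝ} (hu : Differentiable ℂ u)
    (hre : ∀ z, (u z).re ≤ A + B * Real.log (1 + ‖z‖)) : ∃ a, ∀ z, u z = a := by
  refine ⟨u 0, fun z => is_const_of_deriv_eq_zero hu (fun c => ?_) z 0⟩
  set D := |A| + 1 + ‖u 0‖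
  have hbound : ∀ R, 4 * ‖c‖ + 1 ≤ R →
      ‖deriv u c‖ ≤ 8 * (D / R + |B| * (Real.log (1 + R) / R)) := fun R hR => by
    have hR0 : 0 < R := by linarith [norm_nonneg c]
    have hlog : 0 ≤ Real.log (1 + R) := Real.log_nonneg (by linarith)
    have hre' : ∀ x ∈ ball (0 : ℂ) R, (u x).re ≤ |A| + |B| * Real.log (1 + R) + 1 :=
      fun x hx => by
        rw [mem_ball_zero_iff] at hx
        have : B * Real.log (1 + ‖x‖) ≤ |B| * Real.log (1 + R) := by
          calc B * Real.log (1 + ‖x‖) ≤ |B| * Real.log (1 + ‖x‖) :=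
                mul_le_mul_of_nonneg_right (le_abs_self B) (Real.log_nonneg (by simp))
            _ ≤ |B| * Real.log (1 + R) := by gcongr
        linarith [hre x, le_abs_self A]
    calc ‖deriv u c‖ ≤ 8 * (|A| + |B| * Real.log (1 + R) + 1 + ‖u 0‖) / R :=
          norm_deriv_le_of_re_le hu.differentiableOn hR0 (by positivity) hre' (by linarith)
      _ = 8 * (D / R + |B| * (Real.log (1 + R) / R)) := by field_simp; ring
  have hlim : Tendsto (fun R => 8 * (D / R + |B| * (Real.log (1 + R) / R))) atTop (𝓝 0) := by
    have hlog : Tendsto (fun R => Real.log (1 + R) / R) atTop (𝓝 0) := by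
      have := (Real.tendsto_pow_log_div_mul_add_atTop 1 (-1) 1 one_ne_zero).comp
        (tendsto_atTop_add_const_left atTop 1 tendsto_id)
      refine this.congr fun R => ?_
      simp
    simpa using ((tendsto_const_nhds.div_atTop tendsto_id).add (hlog.const_mul |B|)).const_mul 8
  exact norm_le_zero_iff.1 <| ge_of_tendsto hlim <|
    eventually_atTop.2 ⟨4 * ‖c‖ + 1, hbound⟩

theorem norm_sub_le_exp_of_deriv_eq_cexp_neg_pow {g : ℂ → ℂ} {n : ℕ} (hg : Differentiable ℂ g)
    (hg' : ∀ z, deriv g z = cexp (-z ^ n)) (w z : ℂ) :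
    ‖g z - w‖ ≤ Real.exp (‖z‖ ^ n + ‖z‖ + ‖g 0 - w‖) := by
  have hbound : ∀ x ∈ closedBall (0 : ℂ) ‖z‖, ‖deriv g x‖ ≤ Real.exp (‖z‖ ^ n) := by
    intro x hx
    rw [mem_closedBall_zero_iff] at hx
    rw [hg', norm_exp, Real.exp_le_exp]
    calc (-x ^ n).re ≤ ‖-x ^ n‖ := re_le_norm _
      _ = ‖x‖ ^ n := by rw [norm_neg, norm_pow]
      _ ≤ ‖z‖ ^ n := by gcongr
  have hmvt : ‖g z - g 0‖ ≤ Real.exp (‖z‖ ^ n) * ‖z‖ := by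
    simpa using (convex_closedBall (0 : ℂ) ‖z‖).norm_image_sub_le_of_norm_deriv_le
      (fun x _ => hg x) hbound (mem_closedBall_self (norm_nonneg z)) (by simp)
  set c := ‖g 0 - w‖
  calc ‖g z - w‖ ≤ ‖g z - g 0‖ + c := norm_sub_le_norm_sub_add_norm_sub _ _ _
    _ ≤ Real.exp (‖z‖ ^ n) * (‖z‖ + c) := by
      rw [mul_add]
      gcongr
      exact le_mul_of_one_le_left (norm_nonneg _) (Real.one_le_exp (by positivity))
    _ ≤ Real.exp (‖z‖ ^ n) * Real.exp (‖z‖ + c) := by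
      gcongr; linarith [Real.add_one_le_exp (‖z‖ + c)]
    _ = Real.exp (‖z‖ ^ n + ‖z‖ + c) := by rw [← Real.exp_add, add_assoc]

theorem surjective_of_deriv_eq_cexp_neg_pow {g : ℂ → ℂ} {n : ℕ} (hn : n ≠ 1)
    (hg : Differentiable ℂ g) (hg' : ∀ z, deriv g z = cexp (-z ^ n)) :
    Function.Surjective g := by
  intro w
  by_contra! hw
  obtain ⟨h, hh, hexp⟩ := exists_hasDerivAt_cexp_eq (hg.sub_const w)
    fun z => sub_ne_zero.2 (hw z)
  set u : ℂ → ℂ := fun z => -z ^ n - h z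
  have hexp_u : ∀ z, cexp (u z) = deriv h z := fun z => by
    rw [(hh z).deriv, deriv_sub_const, hg', ← hexp, ← exp_sub]
  have hre_h : ∀ z, (h z).re ≤ (2 + ‖g 0 - w‖) * (1 + ‖z‖) ^ (n + 1) := fun z => by
    have hre : (h z).re ≤ ‖z‖ ^ n + ‖z‖ + ‖g 0 - w‖ := by
      rw [← Real.exp_le_exp, ← norm_exp, hexp]
      exact norm_sub_le_exp_of_deriv_eq_cexp_neg_pow hg hg' w z
    have h1 : 1 ≤ 1 + ‖z‖ := le_add_of_nonneg_right (norm_nonneg z)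
    have hzn : ‖z‖ ^ n ≤ (1 + ‖z‖) ^ (n + 1) :=
      (pow_le_pow_left₀ (norm_nonneg z) (by linarith) n).trans (pow_le_pow_right₀ h1 (by omega))
    have hz : ‖z‖ ≤ (1 + ‖z‖) ^ (n + 1) :=
      (le_add_of_nonneg_left zero_le_one).trans (le_self_pow₀ h1 (by omega))
    have hc : ‖g 0 - w‖ ≤ ‖g 0 - w‖ * (1 + ‖z‖) ^ (n + 1) :=
      le_mul_of_one_le_right (norm_nonneg _) (one_le_pow₀ h1)
    linarith
  obtain ⟨K, hK, hderiv⟩ := exists_norm_deriv_le_mul_pow_of_re_le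
    (fun z => (hh z).differentiableAt) (by positivity) hre_h
  have hre_u : ∀ z, (u z).re ≤ Real.log K + (n + 1 : ℕ) * Real.log (1 + ‖z‖) := fun z => by
    rw [← Real.log_pow, ← Real.log_mul hK.ne' (by positivity),
      Real.le_log_iff_exp_le (by positivity), ← norm_exp, hexp_u]
    exact hderiv z
  obtain ⟨a, ha⟩ := exists_const_forall_eq_of_re_le_log (u := u)
    ((differentiable_pow n).neg.sub fun z => (hh z).differentiableAt) hre_u
  have h_eq : h = fun z => -z ^ n - a := funext fun z => by linear_combination -(ha z)
  have hderiv_zero : deriv (fun z : ℂ => -z ^ n - a) 0 = 0 := by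
    rcases Nat.lt_or_gt_of_ne hn with hn | hn
    · simp [Nat.lt_one_iff.1 hn]
    · simp [zero_pow (by omega : n - 1 ≠ 0)]
  exact exp_ne_zero (u 0) (by rw [hexp_u, h_eq, hderiv_zero])

theorem stmt_12_general (k : ℕ) (g : ℂ → ℂ)
    (hg : Differentiable ℂ g)
    (hg0 : g 0 = 0)
    (hg' : ∀ z : ℂ, deriv g z = Complex.exp (-z ^ (2 * k))) :
    (∀ z : ℂ, g (-z) = -g z) ∧ (∀ z : ℂ, deriv g z ≠ 0) ∧ Set.range g = Set.univ := by
  have heven : (deriv g).Even := fun z => by rw [hg', hg', (even_two_mul k).neg_pow]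
  refine ⟨odd_of_even_deriv hg hg0 heven, fun z => hg' z ▸ exp_ne_zero _, ?_⟩
  exact (surjective_of_deriv_eq_cexp_neg_pow (by omega) hg hg').range_eq

theorem stmt_12 (k : ℕ) (hk : 1 ≤ k) (g : ℂ → ℂ)
    (hg : Differentiable ℂ g)
    (hg0 : g 0 = 0)
    (hg' : ∀ z : ℂ, deriv g z = Complex.exp (-z ^ (2 * k))) :
    (∀ z : ℂ, g (-z) = -g z) ∧ (∀ z : ℂ, deriv g z ≠ 0) ∧ Set.range g = Set.univ :=
  stmt_12_general k g hg hg0 hg'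
end

section
/- There exists a sequence of positive reals (c_n) such that the functions F_n(z) = (c₁e^z + z) ∘ ⋯ ∘ (c_n e^z + z) converge uniformly on compact subsets of ℂ to a nonconstant entire function F, with F(n) > n for every positive integer n. -/
open Filter

/-- `seqF c n` is the composition `(c₁e^z + z) ∘ ⋯ ∘ (c_n e^z + z)`,
with new factors appended on the right. -/
noncomputable def seqF (c : ℕ → ℝ) : ℕ → ℂ → ℂ
  | 0 => id
  | n + 1 => (seqF c n) ∘ (fun z : ℂ => (c (n + 1) : ℂ) * Complex.exp z + z)

/-!
Writing `F_{k+1} = F_k ∘ (c_{k+1} e^z + z)`, the factor `c_{k+1} e^z + z` tends to the identity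
uniformly on compacta as `c_{k+1} → 0`, so `c_{k+1}` can be chosen with `|F_{k+1} - F_k| ≤ 2⁻ᵏ`
on `|z| ≤ k`. The `F_k` then converge locally uniformly, with `|F - F_n| ≤ 2^{1-n}` on `|z| ≤ n`,
so the limit `F` is entire. Every factor maps reals to reals and moves them to the right, so with
`c₁ = 1` we get `F_n(n) ≥ e^n + n`, hence `F(n) ≥ e^n + n - 1 > n`, and `F` is unbounded.
-/

open Topology Metric

section GeometricConvergence

variable {α E : Type*} [PseudoMetricSpace E] {f : ℕ → α → E} {s : ℕ → Set α}

theorem dist_le_two_mul_half_pow (hs : Monotone s)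
    (hf : ∀ n, ∀ z ∈ s n, dist (f n z) (f (n + 1) z) ≤ (1 / 2) ^ n)
    {n m : ℕ} (hnm : n ≤ m) {z : α} (hz : z ∈ s n) :
    dist (f n z) (f m z) ≤ 2 * (1 / 2) ^ n :=
  calc dist (f n z) (f m z) ≤ ∑ i ∈ Finset.Ico n m, (1 / 2 : ℝ) ^ i :=
        dist_le_Ico_sum_of_dist_le hnm fun {k} hk _ => hf k z (hs hk hz)
    _ ≤ (1 / 2) ^ n / (1 - 1 / 2) := geom_sum_Ico_le_of_lt_one (by norm_num) (by norm_num)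
    _ = 2 * (1 / 2) ^ n := by ring

theorem exists_tendstoLocallyUniformly_of_dist_succ_le [TopologicalSpace α] [CompleteSpace E]
    (hs : Monotone s) (hnhds : ∀ z, ∃ n, s n ∈ 𝓝 z)
    (hf : ∀ n, ∀ z ∈ s n, dist (f n z) (f (n + 1) z) ≤ (1 / 2) ^ n) :
    ∃ F : α → E, TendstoLocallyUniformly f F atTop ∧
      ∀ n, ∀ z ∈ s n, dist (f n z) (F z) ≤ 2 * (1 / 2) ^ n := by
  have hsmall : Tendsto (fun n : ℕ => 2 * (1 / 2 : ℝ) ^ n) atTop (𝓝 0) := by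
    simpa using (tendsto_pow_atTop_nhds_zero_of_lt_one (r := (1 / 2 : ℝ)) (by norm_num)
      (by norm_num)).const_mul 2
  have hcauchy : ∀ N, ∀ z ∈ s N, CauchySeq fun n => f n z := by
    intro N z hz
    refine Metric.cauchySeq_iff'.2 fun ε hε => ?_
    obtain ⟨n₀, hNn₀, hn₀⟩ :=
      ((eventually_ge_atTop N).and (hsmall.eventually (gt_mem_nhds hε))).exists
    refine ⟨n₀, fun n hn => ?_⟩
    rw [dist_comm]
    exact (dist_le_two_mul_half_pow hs hf hn (hs hNn₀ hz)).trans_lt hn₀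
  have hconv : ∀ z, ∃ w, Tendsto (fun n => f n z) atTop (𝓝 w) := fun z =>
    let ⟨N, hN⟩ := hnhds z
    cauchySeq_tendsto_of_complete (hcauchy N z (mem_of_mem_nhds hN))
  choose F hF using hconv
  have hdist : ∀ n, ∀ z ∈ s n, dist (f n z) (F z) ≤ 2 * (1 / 2) ^ n := fun n z hz =>
    le_of_tendsto (tendsto_const_nhds.dist (hF z))
      (eventually_atTop.2 ⟨n, fun m hm => dist_le_two_mul_half_pow hs hf hm hz⟩)
  refine ⟨F, fun u hu z => ?_, hdist⟩
  obtain ⟨N, hN⟩ := hnhds z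
  refine ⟨s N, hN, ?_⟩
  obtain ⟨ε, hε, hεu⟩ := Metric.mem_uniformity_dist.1 hu
  filter_upwards [eventually_ge_atTop N, hsmall.eventually (gt_mem_nhds hε)] with n hNn hn y hy
  exact hεu ((dist_comm _ _).trans_le (hdist n y (hs hNn hy)) |>.trans_lt hn)

end GeometricConvergence

section SeqF

open Complex

theorem differentiable_seqF (c : ℕ → ℝ) : ∀ n, Differentiable ℂ (seqF c n)
  | 0 => differentiable_id
  | n + 1 => (differentiable_seqF c n).comp (by fun_prop)

theorem seqF_ofReal_im (c : ℕ → ℝ) : ∀ n (x : ℝ), (seqF c n x).im = 0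
  | 0, _ => ofReal_im _
  | n + 1, x => by
    have h := seqF_ofReal_im c n (c (n + 1) * Real.exp x + x)
    push_cast at h
    exact h

theorem mul_exp_add_le_re_seqF {c : ℕ → ℝ} (hc : ∀ i, 0 ≤ c i) {n : ℕ} (hn : 1 ≤ n) (x : ℝ) :
    c 1 * Real.exp x + x ≤ (seqF c n x).re := by
  induction n, hn using Nat.le_induction generalizing x with
  | base => simp [seqF, ← ofReal_exp]
  | succ n hn ih =>
    have hxy : x ≤ c (n + 1) * Real.exp x + x :=
      le_add_of_nonneg_left (mul_nonneg (hc _) (Real.exp_pos x).le)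
    calc c 1 * Real.exp x + x
        ≤ c 1 * Real.exp (c (n + 1) * Real.exp x + x) + (c (n + 1) * Real.exp x + x) := by
          gcongr; exact hc 1
      _ ≤ (seqF c n ↑(c (n + 1) * Real.exp x + x)).re := ih _
      _ = (seqF c (n + 1) x).re := by simp [seqF]

end SeqF

section Construction

open Complex

theorem exists_pos_forall_norm_comp_mul_exp_add_sub_lt {G : ℂ → ℂ} (hG : Continuous G)
    {K : Set ℂ} (hK : IsCompact K) {ε : ℝ} (hε : 0 < ε) :
    ∃ d : ℝ, 0 < d ∧ ∀ z ∈ K, ‖G (d * exp z + z) - G z‖ < ε := by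
  have hnear : ∀ z ∈ K,
      ∀ᶠ p : ℝ × ℂ in 𝓝 ((0 : ℝ), z), ‖G (p.1 * exp p.2 + p.2) - G p.2‖ < ε := by
    intro z _
    have hcont : Continuous fun p : ℝ × ℂ => ‖G (p.1 * exp p.2 + p.2) - G p.2‖ := by fun_prop
    exact hcont.continuousAt.eventually_lt continuousAt_const (by simpa using hε)
  obtain ⟨d, hdK, hd⟩ := (((hK.eventually_forall_of_forall_eventually
    (P := fun (d : ℝ) z => ‖G (d * exp z + z) - G z‖ < ε) hnear).filter_mono
    (nhdsWithin_le_nhds (s := Set.Ioi 0))).and self_mem_nhdsWithin).exists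
  exact ⟨d, hd, hdK⟩

open Classical in
/-- The coefficient `c_{k+1}`, chosen from `G = F_k`: it is `1` for `k = 0`, and otherwise small
enough that `F_{k+1}` is within `2⁻ᵏ` of `F_k` on the closed disc of radius `k`. -/
noncomputable def nextCoeff (k : ℕ) (G : ℂ → ℂ) : ℝ :=
  if h : 0 < k ∧ Continuous G then
    (exists_pos_forall_norm_comp_mul_exp_add_sub_lt h.2 (isCompact_closedBall 0 k)
      (by positivity : (0 : ℝ) < (1 / 2) ^ k)).choose
  else 1

theorem nextCoeff_pos (k : ℕ) (G : ℂ → ℂ) : 0 < nextCoeff k G := by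
  unfold nextCoeff
  split_ifs with h
  · exact (exists_pos_forall_norm_comp_mul_exp_add_sub_lt h.2
      (isCompact_closedBall 0 k) (by positivity)).choose_spec.1
  · exact one_pos

theorem nextCoeff_zero (G : ℂ → ℂ) : nextCoeff 0 G = 1 := by
  simp [nextCoeff]

theorem norm_comp_nextCoeff_sub_lt {k : ℕ} (hk : 0 < k) {G : ℂ → ℂ} (hG : Continuous G)
    {z : ℂ} (hz : z ∈ closedBall 0 k) :
    ‖G (nextCoeff k G * exp z + z) - G z‖ < (1 / 2) ^ k := by
  unfold nextCoeff
  rw [dif_pos ⟨hk, hG⟩]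
  exact (exists_pos_forall_norm_comp_mul_exp_add_sub_lt hG
    (isCompact_closedBall 0 k) (by positivity)).choose_spec.2 z hz

/-- `F_k`, defined together with the coefficients since `c_{k+1}` depends on `F_k`. -/
noncomputable def partialComp : ℕ → ℂ → ℂ
  | 0 => id
  | k + 1 => partialComp k ∘ fun z => (nextCoeff k (partialComp k) : ℂ) * exp z + z

noncomputable def coeff : ℕ → ℝ
  | 0 => 1
  | k + 1 => nextCoeff k (partialComp k)

theorem coeff_pos : ∀ n, 0 < coeff n
  | 0 => one_pos
  | k + 1 => nextCoeff_pos k (partialComp k)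

theorem coeff_one : coeff 1 = 1 :=
  nextCoeff_zero (partialComp 0)

theorem seqF_coeff : ∀ n, seqF coeff n = partialComp n
  | 0 => rfl
  | n + 1 => by rw [seqF, partialComp, seqF_coeff n]; rfl

theorem dist_seqF_coeff_succ_le (k : ℕ) (z : ℂ) (hz : z ∈ closedBall (0 : ℂ) k) :
    dist (seqF coeff k z) (seqF coeff (k + 1) z) ≤ (1 / 2) ^ k := by
  rcases Nat.eq_zero_or_pos k with rfl | hk
  · obtain rfl : z = 0 := by simpa using hz
    simp [seqF, coeff_one]
  · have hcont : Continuous (partialComp k) :=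
      seqF_coeff k ▸ (differentiable_seqF coeff k).continuous
    rw [seqF_coeff, seqF_coeff, dist_comm, dist_eq_norm]
    exact (norm_comp_nextCoeff_sub_lt hk hcont hz).le

theorem exists_tendstoLocallyUniformly_seqF_coeff :
    ∃ F : ℂ → ℂ, TendstoLocallyUniformly (seqF coeff) F atTop ∧
      ∀ n : ℕ, ∀ z ∈ closedBall (0 : ℂ) n, dist (seqF coeff n z) (F z) ≤ 2 * (1 / 2) ^ n := by
  refine exists_tendstoLocallyUniformly_of_dist_succ_le
    (fun _ _ h => closedBall_subset_closedBall (Nat.cast_le.2 h)) (fun z => ?_)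
    dist_seqF_coeff_succ_le
  exact ⟨⌊‖z‖⌋₊ + 1, closedBall_mem_nhds_of_mem (by simpa using Nat.lt_floor_add_one ‖z‖)⟩

end Construction

section Limit

open Complex

theorem im_eq_zero_of_tendsto_seqF {c : ℕ → ℝ} {x : ℝ} {w : ℂ}
    (h : Tendsto (fun n => seqF c n x) atTop (𝓝 w)) : w.im = 0 :=
  tendsto_nhds_unique ((continuous_im.tendsto w).comp h)
    (by simpa only [Function.comp_def, seqF_ofReal_im] using tendsto_const_nhds)

theorem lt_re_of_dist_seqF_le {c : ℕ → ℝ} (hc : ∀ i, 0 ≤ c i) (hc₁ : c 1 = 1) {n : ℕ}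
    (hn : 0 < n) {w : ℂ} (h : dist (seqF c n n) w ≤ 2 * (1 / 2) ^ n) : (n : ℝ) < w.re := by
  have htail : (1 / 2 : ℝ) ^ n ≤ 1 / 2 := pow_le_of_le_one (by norm_num) (by norm_num) hn.ne'
  have hexp : 1 < Real.exp n := Real.one_lt_exp_iff.2 (by exact_mod_cast hn)
  have hre : (seqF c n n).re - w.re ≤ dist (seqF c n n) w := by
    simpa [dist_eq_norm] using re_le_norm (seqF c n n - w)
  have hlow := mul_exp_add_le_re_seqF hc hn n
  rw [hc₁, one_mul, ofReal_natCast] at hlow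
  linarith

end Limit

theorem TendstoLocallyUniformly.differentiable {ι E : Type*} [NormedAddCommGroup E]
    [NormedSpace ℂ E] [CompleteSpace E] {φ : Filter ι} [φ.NeBot] {F : ι → ℂ → E} {f : ℂ → E}
    (hf : TendstoLocallyUniformly F f φ) (hF : ∀ᶠ n in φ, Differentiable ℂ (F n)) :
    Differentiable ℂ f :=
  differentiableOn_univ.1 <| hf.tendstoLocallyUniformlyOn.differentiableOn
    (hF.mono fun _ h => h.differentiableOn) isOpen_univ

theorem exists_ne_of_forall_nat_lt_re {F : ℂ → ℂ} (h : ∀ n : ℕ, 0 < n → (n : ℝ) < (F n).re) :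
    ∃ z w : ℂ, F z ≠ F w := by
  have h₁ : (1 : ℝ) < (F 1).re := by exact_mod_cast h 1 one_pos
  obtain ⟨n, hn⟩ := exists_nat_gt (F 1).re
  have hn₀ : 0 < n := by exact_mod_cast (zero_lt_one.trans h₁).trans hn
  refine ⟨n, 1, fun h' => ?_⟩
  have := h n hn₀
  rw [h'] at this
  linarith

theorem stmt_18 :
    ∃ c : ℕ → ℝ, (∀ n : ℕ, 0 < c n) ∧
      ∃ F : ℂ → ℂ, Differentiable ℂ F ∧
        TendstoLocallyUniformly (fun n : ℕ => seqF c n) F atTop ∧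
        (∃ z w : ℂ, F z ≠ F w) ∧
        (∀ n : ℕ, 0 < n → (F (n : ℂ)).im = 0 ∧ (n : ℝ) < (F (n : ℂ)).re) := by
  obtain ⟨F, hlim, hdist⟩ := exists_tendstoLocallyUniformly_seqF_coeff
  have hnat : ∀ n : ℕ, 0 < n → (F n).im = 0 ∧ (n : ℝ) < (F n).re := fun n hn =>
    ⟨im_eq_zero_of_tendsto_seqF (x := n)
        (by simpa using hlim.tendstoLocallyUniformlyOn.tendsto_at (Set.mem_univ (n : ℂ))),
      lt_re_of_dist_seqF_le (fun i => (coeff_pos i).le) coeff_one hn (hdist n n (by simp))⟩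
  exact ⟨coeff, coeff_pos, F,
    hlim.differentiable (Eventually.of_forall (differentiable_seqF coeff)), hlim,
    exists_ne_of_forall_nat_lt_re fun n hn => (hnat n hn).2, hnat⟩
end
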